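/- Let k ∈ ℕ with k ≥ 1, let 0 < ε < 1/k, and let f(x) = x + π/k + ε sin²(kx) on ℝ. For any x with 0 < x < π/k, the sequence (f^j(x) − jπ/k)_{j≥0} is strictly increasing and bounded above by π/k. -/

import Mathlib

/-!
Write `f = h + π/k` with `h y = y + ε sin²(k y)`. Since `sin²(k ·)` has period `π/k`, `h` commutes
with the translation by `π/k`, so `f^[j] x - j π/k = h^[j] x`. On `(0, π/k)` the bump
`ε sin²(k y)` is positive, and `ε sin²(k y) < sin(k y) / k < (π - k y) / k`, so `h` maps
`(0, π/k)` into itself and moves every point strictly to the right.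
-/

open Real Set Function

theorem iterate_eq_iterate_add_nsmul {G : Type*} [AddMonoid G] {f h : G → G} {c : G}
    (hf : ∀ y, f y = h y + c) (hc : ∀ y, h (y + c) = h y + c) (n : ℕ) (x : G) :
    f^[n] x = h^[n] x + n • c := by
  have hcomm : Function.Commute (· + c) h := fun y => (hc y).symm
  have hfc : f = (· + c) ∘ h := funext hf
  rw [hfc, hcomm.comp_iterate, comp_apply, add_right_iterate_apply]

noncomputable def sinSqPerturb (k ε y : ℝ) : ℝ := y + ε * sin (k * y) ^ 2

section

variable {k ε : ℝ}

theorem sinSqPerturb_add_pi_div (hk : k ≠ 0) (y : ℝ) :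
    sinSqPerturb k ε (y + π / k) = sinSqPerturb k ε y + π / k := by
  have harg : k * (y + π / k) = k * y + π := by field_simp
  rw [sinSqPerturb, sinSqPerturb, harg, sin_add_pi, neg_sq]
  ring

theorem sin_mul_pos_of_mem_Ioo (hk : 0 < k) {y : ℝ} (hy : y ∈ Ioo 0 (π / k)) :
    0 < sin (k * y) := by
  have hky : k * y < π := by rw [← lt_div_iff₀' hk]; exact hy.2
  exact sin_pos_of_pos_of_lt_pi (mul_pos hk hy.1) hky

theorem lt_sinSqPerturb (hk : 0 < k) (hε : 0 < ε) {y : ℝ} (hy : y ∈ Ioo 0 (π / k)) :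
    y < sinSqPerturb k ε y :=
  lt_add_of_pos_right y (mul_pos hε (pow_pos (sin_mul_pos_of_mem_Ioo hk hy) 2))

theorem sinSqPerturb_lt_pi_div (hk : 0 < k) (hε0 : 0 ≤ ε) (hε : ε < 1 / k) {y : ℝ}
    (hy : y ∈ Ioo 0 (π / k)) : sinSqPerturb k ε y < π / k := by
  have hsin_pos := sin_mul_pos_of_mem_Ioo hk hy
  have hky : k * y < π := by rw [← lt_div_iff₀' hk]; exact hy.2
  have hsin_lt : sin (k * y) < π - k * y := by
    simpa only [sin_pi_sub] using sin_lt (x := π - k * y) (by linarith)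
  have hεk : ε * k < 1 := (lt_div_iff₀ hk).mp hε
  have hbump : k * (ε * sin (k * y) ^ 2) < π - k * y :=
    calc k * (ε * sin (k * y) ^ 2) = (ε * k) * sin (k * y) * sin (k * y) := by ring
      _ ≤ (ε * k) * sin (k * y) * 1 := by
          gcongr
          exact sin_le_one _
      _ < 1 * sin (k * y) := by rw [mul_one]; exact mul_lt_mul_of_pos_right hεk hsin_pos
      _ < π - k * y := by linarith
  rw [sinSqPerturb, lt_div_iff₀' hk]
  linarith

theorem mapsTo_sinSqPerturb (hk : 0 < k) (hε0 : 0 ≤ ε) (hε : ε < 1 / k) :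
    MapsTo (sinSqPerturb k ε) (Ioo 0 (π / k)) (Ioo 0 (π / k)) := fun y hy =>
  ⟨hy.1.trans_le (le_add_of_nonneg_right (by positivity)),
    sinSqPerturb_lt_pi_div hk hε0 hε hy⟩

end

/-- for `f(x) = x + π/k + ε sin²(kx)` with `k ≥ 1` and `0 < ε < 1/k`,
for any `0 < x < π/k` the sequence `j ↦ f^[j] x − j π/k` is strictly increasing and
bounded above by `π/k`. -/
theorem iterates_strictMono_bounded (k : ℕ) (hk : 1 ≤ k) (ε : ℝ)
    (hε0 : 0 < ε) (hε : ε < 1 / k)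
    (f : ℝ → ℝ) (hf : ∀ x, f x = x + Real.pi / k + ε * (Real.sin (k * x)) ^ 2)
    (x : ℝ) (hx0 : 0 < x) (hx : x < Real.pi / k) :
    StrictMono (fun j : ℕ => f^[j] x - j * (Real.pi / k)) ∧
      ∀ j : ℕ, f^[j] x - j * (Real.pi / k) ≤ Real.pi / k := by
  have hk0 : (0 : ℝ) < k := by exact_mod_cast hk
  have hf' : ∀ y, f y = sinSqPerturb k ε y + π / k := fun y => by
    rw [hf, sinSqPerturb]; ring
  have hseq (j : ℕ) : f^[j] x - j * (π / k) = (sinSqPerturb k ε)^[j] x := by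
    rw [iterate_eq_iterate_add_nsmul hf' (sinSqPerturb_add_pi_div hk0.ne') j x, nsmul_eq_mul]
    ring
  have hmem : ∀ j, (sinSqPerturb k ε)^[j] x ∈ Ioo 0 (π / k) := fun j =>
    (mapsTo_sinSqPerturb hk0 hε0.le hε).iterate j ⟨hx0, hx⟩
  simp only [hseq]
  refine ⟨strictMono_nat_of_lt_succ fun j => ?_, fun j => (hmem j).2.le⟩
  rw [iterate_succ_apply']
  exact lt_sinSqPerturb hk0 hε0 (hmem j)
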